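/- Let n ≥ 2 and let S_n(Sym_n) be the monoid presented by generators x_1,…,x_n and relations x_{σ(1)}x_{σ(2)}⋯x_{σ(n)} = x_1x_2⋯x_n for all σ ∈ Sym_n. Then for every m ≥ 1 and all indices i_1,…,i_m with 2 ≤ i_1,…,i_m ≤ n, the identity x_ε·x_{i_1}x_{i_2}⋯x_{i_m}·x_1 = x_1·x_ε·x_{i_1}x_{i_2}⋯x_{i_m} holds in S_n(Sym_n), where x_ε = x_1x_2⋯x_n. -/

import Mathlib

/-- The word `x_{σ(1)} x_{σ(2)} ⋯ x_{σ(n)}` in the free monoid on `n` generators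
(generator `x_j` is indexed by `j-1 : Fin n`). -/
def permWord {n : ℕ} (σ : Equiv.Perm (Fin n)) : FreeMonoid (Fin n) :=
  FreeMonoid.ofList (List.ofFn fun i => σ i)

/-- The word `x_ε = x_1 x_2 ⋯ x_n`. -/
def epsWord (n : ℕ) : FreeMonoid (Fin n) :=
  FreeMonoid.ofList (List.ofFn fun i : Fin n => i)

/-- The defining relations `x_{σ(1)} ⋯ x_{σ(n)} = x_1 ⋯ x_n`, `σ ∈ Sym_n`. -/
def symRel (n : ℕ) : FreeMonoid (Fin n) → FreeMonoid (Fin n) → Prop :=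
  fun a b => ∃ σ : Equiv.Perm (Fin n), a = permWord σ ∧ b = epsWord n

/-- The canonical projection from the free monoid onto `S_n(Sym_n)`. -/
def proj (n : ℕ) : FreeMonoid (Fin n) →* PresentedMonoid (symRel n) :=
  PresentedMonoid.mk (symRel n)

/-- `u` contains a subword of the form `x_{σ(1)} ⋯ x_{σ(n)}` for some `σ ∈ Sym_n`. -/
def HasPermSubword {n : ℕ} (u : FreeMonoid (Fin n)) : Prop :=
  ∃ (σ : Equiv.Perm (Fin n)) (a b : FreeMonoid (Fin n)), u = a * permWord σ * b

/-- The word `x_1^{m_1} · x_ε · x_2^{m_2} ⋯ x_n^{m_n}` (0-indexed: `m i` is the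
exponent of generator `i`). -/
def normalWord (n : ℕ) (h : 0 < n) (m : Fin n → ℕ) : FreeMonoid (Fin n) :=
  FreeMonoid.ofList (List.replicate (m ⟨0, h⟩) ⟨0, h⟩) * epsWord n *
    FreeMonoid.ofList (((List.finRange n).drop 1).flatMap fun i => List.replicate (m i) i)

/-
Any word listing each generator exactly once equals `x_ε`. So if `u c` and `c w` both list every
generator once, then `x_ε w = u c w = u x_ε`. With `u = w = x_i` this makes `x_ε` central; with
`u = x_j x_i`, `w = x_i x_j` it gives `x_ε x_i x_j = x_j x_i x_ε = x_ε x_j x_i`. Hence `x_ε u` only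
depends on the multiset of letters of `u`, and `x_ε l x_1 = x_ε x_1 l = x_1 x_ε l`.
-/

open List FreeMonoid

section

variable {n : ℕ}

theorem exists_append_perm_finRange {w : List (Fin n)} (hw : w.Nodup) :
    ∃ c, w ++ c ~ finRange n :=
  ⟨_, subperm_append_diff_self_of_count_le <|
    subperm_ext_iff.mp (hw.subperm fun x _ => mem_finRange x)⟩

theorem proj_ofList_eq_proj_epsWord {L : List (Fin n)} (h : L ~ finRange n) :
    proj n (ofList L) = proj n (epsWord n) := by
  have hlen : L.length = n := by simpa using h.length_eq
  let σ : Equiv.Perm (Fin n) :=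
    (finCongr hlen.symm).trans <| Nodup.getEquivOfForallMemList L
      (h.nodup_iff.mpr (nodup_finRange n)) fun x => h.mem_iff.mpr (mem_finRange x)
  have hσ : permWord σ = ofList L := by
    refine congrArg ofList (ext_getElem (by simp [hlen]) fun i _ _ => ?_)
    simp [σ]
  rw [← hσ]
  exact PresentedMonoid.mk_eq_mk_of_rel ⟨σ, rfl, rfl⟩

theorem proj_epsWord_mul_eq_mul_proj_epsWord {u c w : List (Fin n)} (hu : u ++ c ~ finRange n)
    (hw : c ++ w ~ finRange n) :
    proj n (epsWord n) * proj n (ofList w) = proj n (ofList u) * proj n (epsWord n) := by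
  calc proj n (epsWord n) * proj n (ofList w)
      = proj n (ofList (u ++ c)) * proj n (ofList w) := by rw [proj_ofList_eq_proj_epsWord hu]
    _ = proj n (ofList u) * proj n (ofList (c ++ w)) := by
        simp only [ofList_append, map_mul, mul_assoc]
    _ = proj n (ofList u) * proj n (epsWord n) := by rw [proj_ofList_eq_proj_epsWord hw]

theorem commute_proj_epsWord_of (i : Fin n) : Commute (proj n (epsWord n)) (proj n (of i)) := by
  obtain ⟨c, hc⟩ := exists_append_perm_finRange (nodup_singleton i)
  exact proj_epsWord_mul_eq_mul_proj_epsWord hc (perm_append_comm.trans hc)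

theorem proj_epsWord_mul_pair_comm (i j : Fin n) :
    proj n (epsWord n) * proj n (ofList [i, j]) = proj n (epsWord n) * proj n (ofList [j, i]) := by
  rcases eq_or_ne i j with rfl | hij
  · rfl
  obtain ⟨c, hc⟩ := exists_append_perm_finRange (w := [j, i]) (by simpa using hij.symm)
  have hcji : c ++ [j, i] ~ finRange n := perm_append_comm.trans hc
  have hcij : c ++ [i, j] ~ finRange n := ((perm_append_left_iff c).mpr (.swap j i [])).trans hcji
  rw [proj_epsWord_mul_eq_mul_proj_epsWord hc hcij, proj_epsWord_mul_eq_mul_proj_epsWord hc hcji]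

theorem proj_epsWord_mul_ofList_perm {u v : List (Fin n)} (h : u ~ v) :
    proj n (epsWord n) * proj n (ofList u) = proj n (epsWord n) * proj n (ofList v) := by
  induction h with
  | nil => rfl
  | cons x _ ih =>
    simp only [ofList_cons, map_mul, ← mul_assoc, (commute_proj_epsWord_of x).eq]
    simp only [mul_assoc, ih]
  | swap x y l =>
    change _ * proj n (ofList ([y, x] ++ l)) = _ * proj n (ofList ([x, y] ++ l))
    rw [ofList_append, ofList_append, map_mul, map_mul, ← mul_assoc, ← mul_assoc,
      proj_epsWord_mul_pair_comm]
  | trans _ _ ih₁ ih₂ => exact ih₁.trans ih₂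

end

/-- For `m ≥ 1` indices `i_1, …, i_m` with `2 ≤ i_t ≤ n` (0-indexed: values ≠ 0),
`x_ε · x_{i_1} ⋯ x_{i_m} · x_1 = x_1 · x_ε · x_{i_1} ⋯ x_{i_m}` holds in `S_n(Sym_n)`. -/
theorem eps_mul_x1_comm (n : ℕ) (hn : 2 ≤ n) (l : List (Fin n)) :
    proj n (epsWord n) * proj n (FreeMonoid.ofList l) *
        proj n (FreeMonoid.of (⟨0, by omega⟩ : Fin n)) =
      proj n (FreeMonoid.of (⟨0, by omega⟩ : Fin n)) * proj n (epsWord n) *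
        proj n (FreeMonoid.ofList l) := by
  set x₁ : Fin n := ⟨0, by omega⟩
  calc proj n (epsWord n) * proj n (ofList l) * proj n (of x₁)
      = proj n (epsWord n) * proj n (ofList (l ++ [x₁])) := by
        rw [ofList_append, map_mul, mul_assoc, ofList_singleton]
    _ = proj n (epsWord n) * proj n (ofList (x₁ :: l)) :=
        proj_epsWord_mul_ofList_perm (perm_append_singleton x₁ l)
    _ = proj n (of x₁) * proj n (epsWord n) * proj n (ofList l) := by
        rw [ofList_cons, map_mul, ← mul_assoc, (commute_proj_epsWord_of x₁).eq]
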